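/- Let f: R^{n_x} × R^{n_u} → R and g: R^{n_x} × R^{n_u} → R^{n_x} be twice continuously differentiable, x(u) a twice differentiable implicit solution of g(x(u),u)=0 with ∇_x g invertible, and λ(u) defined by (∇_x g)ᵀ λ = −(∂_x f)ᵀ evaluated at (x(u),u). Define the Lagrangian ℓ(x,u,λ) = f(x,u) + λᵀ g(x,u). Then for any vector w ∈ R^{n_u}, the Hessian-vector product of the reduced function F(u) = f(x(u),u) satisfies (∇² F) w = (∇²_{uu} ℓ) w + (∇²_{ux} ℓ)ᵀ z + (∇_u g)ᵀ ψ, where z solves (∇_x g) z = −(∇_u g) w and ψ solves (∇_x g)ᵀ ψ = −(∇²_{xu} ℓ) w − (∇²_{xx} ℓ) z, all derivatives evaluated at (x(u), u, λ(u)). -/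

import Mathlib

open Matrix

noncomputable def mCLM {m n : ℕ} (A : Matrix (Fin m) (Fin n) ℝ) :
    (Fin n → ℝ) →L[ℝ] (Fin m → ℝ) :=
  LinearMap.toContinuousLinearMap A.mulVecLin

noncomputable def dCLM {n : ℕ} (a : Fin n → ℝ) : (Fin n → ℝ) →L[ℝ] ℝ :=
  (ContinuousLinearMap.proj (0 : Fin 1)).comp (mCLM (Matrix.of fun _ : Fin 1 => a))

open Filter Topology

/-!
Along the graph `u ↦ (x u, u)`, with the multiplier `λ(u)`, the partial gradients of the
Lagrangian satisfy `∂ₓℓ = 0` (the adjoint equation) and `∂ᵤℓ = ∇F` (the chain rule, whose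
`x'`-term is killed by `∂ₓℓ = 0`). Differentiating both identities at `u₀` in the direction `w`,
with `z = x' w` obtained by differentiating `g (x u) u = 0`, gives
`∇²ₓₓℓ z + ∇²ₓᵤℓ w + (∇ₓg)ᵀ λ' w = 0` and `∇²F w = ∇²ᵤₓℓ z + ∇²ᵤᵤℓ w + (∇ᵤg)ᵀ λ' w`.
The first identity says `λ' w = ψ`, and `∇²ᵤₓℓ = (∇²ₓᵤℓ)ᵀ` by the symmetry of the second
derivative of the `C²` function `ℓ(·, ·, λ(u₀))`. The gradient blocks are only differentiated after
pairing with a fixed test vector, where they become directional derivatives of `ℓ`.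
-/

section Partial

variable {𝕜 : Type*} [NontriviallyNormedField 𝕜]
  {E F G : Type*} [NormedAddCommGroup E] [NormedSpace 𝕜 E] [NormedAddCommGroup F]
  [NormedSpace 𝕜 F] [NormedAddCommGroup G] [NormedSpace 𝕜 G] {Φ : E × F → G} {p : E × F}

theorem HasFDerivAt.comp_inl_eq {D : E × F →L[𝕜] G} {A : E →L[𝕜] G}
    (hΦ : HasFDerivAt Φ D p) (hA : HasFDerivAt (fun a => Φ (a, p.2)) A p.1) :
    D.comp (.inl 𝕜 E F) = A :=
  (hΦ.comp p.1 (hasFDerivAt_prodMk_left p.1 p.2)).unique hA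

theorem HasFDerivAt.comp_inr_eq {D : E × F →L[𝕜] G} {B : F →L[𝕜] G}
    (hΦ : HasFDerivAt Φ D p) (hB : HasFDerivAt (fun b => Φ (p.1, b)) B p.2) :
    D.comp (.inr 𝕜 E F) = B :=
  (hΦ.comp p.2 (hasFDerivAt_prodMk_right p.1 p.2)).unique hB

theorem DifferentiableAt.hasFDerivAt_coprod {A : E →L[𝕜] G} {B : F →L[𝕜] G}
    (hΦ : DifferentiableAt 𝕜 Φ p) (hA : HasFDerivAt (fun a => Φ (a, p.2)) A p.1)
    (hB : HasFDerivAt (fun b => Φ (p.1, b)) B p.2) : HasFDerivAt Φ (A.coprod B) p := by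
  have h := hΦ.hasFDerivAt
  convert h using 1
  rw [← (fderiv 𝕜 Φ p).coprod_comp_inl_inr, h.comp_inl_eq hA, h.comp_inr_eq hB]

theorem HasFDerivAt.comp_graph {A : E →L[𝕜] G} {B : F →L[𝕜] G} {x : F → E}
    {x' : F →L[𝕜] E} {u : F} (hΦ : HasFDerivAt Φ (A.coprod B) (x u, u))
    (hx : HasFDerivAt x x' u) : HasFDerivAt (fun v => Φ (x v, v)) (A.comp x' + B) u := by
  refine (hΦ.comp (f := fun v => (x v, v)) u (hx.prodMk (hasFDerivAt_id u))).congr_fderiv ?_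
  ext v
  simp

theorem HasFDerivAt.comp_add_eq_zero_of_eventually_eq_zero {A : E →L[𝕜] G}
    {B : F →L[𝕜] G} {x : F → E} {x' : F →L[𝕜] E} {u : F}
    (hΦ : HasFDerivAt Φ (A.coprod B) (x u, u)) (hx : HasFDerivAt x x' u)
    (h0 : ∀ᶠ v in 𝓝 u, Φ (x v, v) = 0) : A.comp x' + B = 0 :=
  (hΦ.comp_graph hx).unique ((hasFDerivAt_const 0 u).congr_of_eventuallyEq h0)

theorem fderiv_fderiv_apply_of_hasFDerivAt_left {ℓ : E × F → G}
    (hℓ : DifferentiableAt 𝕜 (fderiv 𝕜 ℓ) p) (v : E × F) {A : E →L[𝕜] G}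
    (hA : HasFDerivAt (fun a => fderiv 𝕜 ℓ (a, p.2) v) A p.1) (a : E) :
    fderiv 𝕜 (fderiv 𝕜 ℓ) p (a, 0) v = A a := by
  have h := (hℓ.hasFDerivAt.clm_apply (hasFDerivAt_const v p)).comp_inl_eq hA
  simpa using congrArg (· a) h

theorem fderiv_fderiv_apply_of_hasFDerivAt_right {ℓ : E × F → G}
    (hℓ : DifferentiableAt 𝕜 (fderiv 𝕜 ℓ) p) (v : E × F) {B : F →L[𝕜] G}
    (hB : HasFDerivAt (fun b => fderiv 𝕜 ℓ (p.1, b) v) B p.2) (b : F) :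
    fderiv 𝕜 (fderiv 𝕜 ℓ) p (0, b) v = B b := by
  have h := (hℓ.hasFDerivAt.clm_apply (hasFDerivAt_const v p)).comp_inr_eq hB
  simpa using congrArg (· b) h

theorem ContDiff.differentiable_fderiv {f : E → G} (hf : ContDiff 𝕜 2 f) :
    Differentiable 𝕜 (fderiv 𝕜 f) :=
  (hf.fderiv_right (m := 1) le_rfl).differentiable one_ne_zero

end Partial

section Vectors

variable {E : Type*} [NormedAddCommGroup E] [NormedSpace ℝ E] {k : ℕ}

theorem mCLM_apply {m n : ℕ} (A : Matrix (Fin m) (Fin n) ℝ) (v : Fin n → ℝ) :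
    mCLM A v = A *ᵥ v := rfl

theorem dCLM_apply (a v : Fin k → ℝ) : dCLM a v = a ⬝ᵥ v := rfl

theorem dCLM_injective : Function.Injective (dCLM (n := k)) := fun a b h =>
  dotProduct_eq a b fun v => congrArg (· v) h

theorem HasFDerivAt.dotProduct_const {V : E → Fin k → ℝ} {V' : E →L[ℝ] Fin k → ℝ} {x : E}
    (hV : HasFDerivAt V V' x) (c : Fin k → ℝ) :
    HasFDerivAt (fun y => V y ⬝ᵥ c) ((dCLM c).comp V') x := by
  have h : (fun y => V y ⬝ᵥ c) = dCLM c ∘ V := funext fun y => dotProduct_comm _ _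
  exact h ▸ (dCLM c).hasFDerivAt.comp x hV

theorem hasFDerivAt_of_forall_dotProduct {V : E → Fin k → ℝ} {V' : E →L[ℝ] Fin k → ℝ} {x : E}
    (hV : ∀ c, HasFDerivAt (fun y => V y ⬝ᵥ c) ((dCLM c).comp V') x) : HasFDerivAt V V' x :=
  hasFDerivAt_pi'.2 fun i => by
    have h := hV (Pi.single i 1)
    simp only [dotProduct_single, mul_one] at h
    refine h.congr_fderiv ?_
    ext w
    simp [dCLM_apply]

theorem HasFDerivAt.dotProduct_of_eq_zero {v m : E → Fin k → ℝ} {v' : E →L[ℝ] Fin k → ℝ}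
    {x : E} (hv : HasFDerivAt v v' x) (hm : DifferentiableAt ℝ m x) (h0 : v x = 0) :
    HasFDerivAt (fun y => v y ⬝ᵥ m y) ((dCLM (m x)).comp v') x := by
  have h := HasFDerivAt.fun_sum (u := Finset.univ) fun j _ =>
    ((ContinuousLinearMap.proj j).hasFDerivAt.comp x hv).mul
      (differentiableAt_pi.1 hm j).hasFDerivAt
  refine h.congr_fderiv ?_
  ext w
  simp [h0, dCLM_apply, dotProduct]

end Vectors

section Lagrangian

variable {E F : Type*} [NormedAddCommGroup E] [NormedSpace ℝ E] [NormedAddCommGroup F]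
  [NormedSpace ℝ F] {k : ℕ} {f : E → F → ℝ} {g : E → F → Fin k → ℝ}

def lagrangian (f : E → F → ℝ) (g : E → F → Fin k → ℝ) (μ : Fin k → ℝ) (p : E × F) : ℝ :=
  f p.1 p.2 + μ ⬝ᵥ g p.1 p.2

theorem contDiff_lagrangian {r : WithTop ℕ∞} (hf : ContDiff ℝ r fun p : E × F => f p.1 p.2)
    (hg : ContDiff ℝ r fun p : E × F => g p.1 p.2) (μ : Fin k → ℝ) :
    ContDiff ℝ r (lagrangian f g μ) :=
  hf.add ((dCLM μ).contDiff.comp hg)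

theorem fderiv_lagrangian {p : E × F} (hf : DifferentiableAt ℝ (fun p : E × F => f p.1 p.2) p)
    (hg : DifferentiableAt ℝ (fun p : E × F => g p.1 p.2) p) (μ : Fin k → ℝ) :
    fderiv ℝ (lagrangian f g μ) p =
      fderiv ℝ (fun p : E × F => f p.1 p.2) p +
        (dCLM μ).comp (fderiv ℝ (fun p : E × F => g p.1 p.2) p) :=
  (hf.hasFDerivAt.add ((dCLM μ).hasFDerivAt.comp p hg.hasFDerivAt)).fderiv

/-- Writing `λ(u) = λ(u₀) + (λ(u) - λ(u₀))`, the second summand vanishes at `u₀`, so it contributes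
only through `λ'(u₀)` and the multiplier is otherwise frozen at `λ(u₀)`. -/
theorem hasFDerivAt_fderiv_lagrangian_graph (hf : ContDiff ℝ 2 fun p : E × F => f p.1 p.2)
    (hg : ContDiff ℝ 2 fun p : E × F => g p.1 p.2) {x : F → E} {lam : F → Fin k → ℝ} {u₀ : F}
    (hx : DifferentiableAt ℝ x u₀) (hlam : DifferentiableAt ℝ lam u₀) (v : E × F) :
    HasFDerivAt (fun u => fderiv ℝ (lagrangian f g (lam u)) (x u, u) v)
      (((fderiv ℝ (fderiv ℝ (lagrangian f g (lam u₀))) (x u₀, u₀)).comp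
          ((fderiv ℝ x u₀).prod (.id ℝ F))).flip v +
        (dCLM (fderiv ℝ (fun p : E × F => g p.1 p.2) (x u₀, u₀) v)).comp (fderiv ℝ lam u₀)) u₀ := by
  have hf1 := hf.differentiable two_ne_zero
  have hg1 := hg.differentiable two_ne_zero
  have hgraph : HasFDerivAt (fun u => (x u, u)) ((fderiv ℝ x u₀).prod (.id ℝ F)) u₀ :=
    hx.hasFDerivAt.prodMk (hasFDerivAt_id u₀)
  have hfrozen := (((contDiff_lagrangian hf hg (lam u₀)).differentiable_fderiv _).hasFDerivAt.comp
    u₀ hgraph).clm_apply (hasFDerivAt_const v u₀)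
  have hcorr := (hlam.hasFDerivAt.sub_const (lam u₀)).dotProduct_of_eq_zero
    ((hg.differentiable_fderiv _ |>.comp u₀ hgraph.differentiableAt).clm_apply
      (differentiableAt_const v)) (sub_self _)
  refine ((hfrozen.add hcorr).congr_of_eventuallyEq
    (Eventually.of_forall fun u => ?_)).congr_fderiv ?_
  · simp [fderiv_lagrangian (hf1 _) (hg1 _), dCLM_apply, sub_dotProduct]
  · ext w
    simp

end Lagrangian

section PartialGradients

variable {m n k : ℕ} {f : (Fin m → ℝ) → (Fin n → ℝ) → ℝ}
  {g : (Fin m → ℝ) → (Fin n → ℝ) → Fin k → ℝ}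
  {gradfx : (Fin m → ℝ) → (Fin n → ℝ) → Fin m → ℝ}
  {gradfu : (Fin m → ℝ) → (Fin n → ℝ) → Fin n → ℝ}
  {Jgx : (Fin m → ℝ) → (Fin n → ℝ) → Matrix (Fin k) (Fin m) ℝ}
  {Jgu : (Fin m → ℝ) → (Fin n → ℝ) → Matrix (Fin k) (Fin n) ℝ}

def HasPartialGradients (f : (Fin m → ℝ) → (Fin n → ℝ) → ℝ)
    (gradfx : (Fin m → ℝ) → (Fin n → ℝ) → Fin m → ℝ)
    (gradfu : (Fin m → ℝ) → (Fin n → ℝ) → Fin n → ℝ) : Prop :=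
  ∀ p : (Fin m → ℝ) × (Fin n → ℝ), HasFDerivAt (fun p => f p.1 p.2)
    ((dCLM (gradfx p.1 p.2)).coprod (dCLM (gradfu p.1 p.2))) p

def HasPartialJacobians (g : (Fin m → ℝ) → (Fin n → ℝ) → Fin k → ℝ)
    (Jgx : (Fin m → ℝ) → (Fin n → ℝ) → Matrix (Fin k) (Fin m) ℝ)
    (Jgu : (Fin m → ℝ) → (Fin n → ℝ) → Matrix (Fin k) (Fin n) ℝ) : Prop :=
  ∀ p : (Fin m → ℝ) × (Fin n → ℝ), HasFDerivAt (fun p => g p.1 p.2)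
    ((mCLM (Jgx p.1 p.2)).coprod (mCLM (Jgu p.1 p.2))) p

theorem hasFDerivAt_lagrangian (hf' : HasPartialGradients f gradfx gradfu)
    (hg' : HasPartialJacobians g Jgx Jgu) (μ : Fin k → ℝ) (p : (Fin m → ℝ) × (Fin n → ℝ)) :
    HasFDerivAt (lagrangian f g μ)
      ((dCLM (gradfx p.1 p.2 + (Jgx p.1 p.2)ᵀ *ᵥ μ)).coprod
        (dCLM (gradfu p.1 p.2 + (Jgu p.1 p.2)ᵀ *ᵥ μ))) p := by
  refine ((hf' p).add ((dCLM μ).hasFDerivAt.comp p (hg' p))).congr_fderiv ?_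
  ext <;> simp [dCLM_apply, mCLM_apply, add_dotProduct, mulVec_transpose, dotProduct_mulVec]

theorem fderiv_lagrangian_apply
    (hf' : HasPartialGradients f gradfx gradfu) (hg' : HasPartialJacobians g Jgx Jgu)
    (μ : Fin k → ℝ) (x : Fin m → ℝ) (u : Fin n → ℝ) (c : Fin m → ℝ) (d : Fin n → ℝ) :
    fderiv ℝ (lagrangian f g μ) (x, u) (c, d) =
      (gradfx x u + (Jgx x u)ᵀ *ᵥ μ) ⬝ᵥ c + (gradfu x u + (Jgu x u)ᵀ *ᵥ μ) ⬝ᵥ d := by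
  rw [(hasFDerivAt_lagrangian hf' hg' μ _).fderiv]
  rfl

variable {μ : Fin k → ℝ} {x₀ : Fin m → ℝ} {u₀ : Fin n → ℝ} {Lxx : Matrix (Fin m) (Fin m) ℝ}
  {Lxu : Matrix (Fin m) (Fin n) ℝ} {Luu : Matrix (Fin n) (Fin n) ℝ}

theorem fderiv_fderiv_lagrangian_apply_inl
    (hf : ContDiff ℝ 2 fun p : (Fin m → ℝ) × (Fin n → ℝ) => f p.1 p.2)
    (hg : ContDiff ℝ 2 fun p : (Fin m → ℝ) × (Fin n → ℝ) => g p.1 p.2)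
    (hf' : HasPartialGradients f gradfx gradfu) (hg' : HasPartialJacobians g Jgx Jgu)
    (hLxx : HasFDerivAt (fun ξ => gradfx ξ u₀ + (Jgx ξ u₀)ᵀ *ᵥ μ) (mCLM Lxx) x₀)
    (hLxu : HasFDerivAt (fun υ => gradfx x₀ υ + (Jgx x₀ υ)ᵀ *ᵥ μ) (mCLM Lxu) u₀)
    (a : Fin m → ℝ) (b : Fin n → ℝ) (c : Fin m → ℝ) :
    fderiv ℝ (fderiv ℝ (lagrangian f g μ)) (x₀, u₀) (a, b) (c, 0) =
      c ⬝ᵥ (Lxx *ᵥ a + Lxu *ᵥ b) := by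
  have hH : DifferentiableAt ℝ (fderiv ℝ (lagrangian f g μ)) (x₀, u₀) :=
    (contDiff_lagrangian hf hg μ).differentiable_fderiv _
  have hxx := fderiv_fderiv_apply_of_hasFDerivAt_left hH (c, 0)
    (by simpa only [fderiv_lagrangian_apply hf' hg', dotProduct_zero, add_zero]
      using hLxx.dotProduct_const c) a
  have hxu := fderiv_fderiv_apply_of_hasFDerivAt_right hH (c, 0)
    (by simpa only [fderiv_lagrangian_apply hf' hg', dotProduct_zero, add_zero]
      using hLxu.dotProduct_const c) b
  have hsplit : ((a, b) : (Fin m → ℝ) × (Fin n → ℝ)) = (a, 0) + (0, b) := by simp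
  rw [hsplit, map_add, _root_.add_apply, hxx, hxu]
  simp [dCLM_apply, mCLM_apply, dotProduct_add]

theorem fderiv_fderiv_lagrangian_apply_inr
    (hf : ContDiff ℝ 2 fun p : (Fin m → ℝ) × (Fin n → ℝ) => f p.1 p.2)
    (hg : ContDiff ℝ 2 fun p : (Fin m → ℝ) × (Fin n → ℝ) => g p.1 p.2)
    (hf' : HasPartialGradients f gradfx gradfu) (hg' : HasPartialJacobians g Jgx Jgu)
    (hLxx : HasFDerivAt (fun ξ => gradfx ξ u₀ + (Jgx ξ u₀)ᵀ *ᵥ μ) (mCLM Lxx) x₀)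
    (hLxu : HasFDerivAt (fun υ => gradfx x₀ υ + (Jgx x₀ υ)ᵀ *ᵥ μ) (mCLM Lxu) u₀)
    (hLuu : HasFDerivAt (fun υ => gradfu x₀ υ + (Jgu x₀ υ)ᵀ *ᵥ μ) (mCLM Luu) u₀)
    (a : Fin m → ℝ) (b : Fin n → ℝ) (d : Fin n → ℝ) :
    fderiv ℝ (fderiv ℝ (lagrangian f g μ)) (x₀, u₀) (a, b) (0, d) =
      d ⬝ᵥ (Lxuᵀ *ᵥ a + Luu *ᵥ b) := by
  have hℓ := contDiff_lagrangian hf hg μ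
  have hH : DifferentiableAt ℝ (fderiv ℝ (lagrangian f g μ)) (x₀, u₀) :=
    hℓ.differentiable_fderiv _
  have hux : fderiv ℝ (fderiv ℝ (lagrangian f g μ)) (x₀, u₀) (a, 0) (0, d) = a ⬝ᵥ Lxu *ᵥ d := by
    rw [(hℓ.contDiffAt.isSymmSndFDerivAt (by simp)).eq,
      fderiv_fderiv_lagrangian_apply_inl hf hg hf' hg' hLxx hLxu, mulVec_zero, zero_add]
  have huu := fderiv_fderiv_apply_of_hasFDerivAt_right hH (0, d)
    (by simpa only [fderiv_lagrangian_apply hf' hg', dotProduct_zero, zero_add]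
      using hLuu.dotProduct_const d) b
  have hsplit : ((a, b) : (Fin m → ℝ) × (Fin n → ℝ)) = (a, 0) + (0, b) := by simp
  rw [hsplit, map_add, _root_.add_apply, hux, huu, dotProduct_mulVec, ← mulVec_transpose]
  simp [dCLM_apply, mCLM_apply, dotProduct_add, dotProduct_comm]

theorem hasFDerivAt_reduced_of_adjoint
    (hf' : HasPartialGradients f gradfx gradfu) (hg' : HasPartialJacobians g Jgx Jgu)
    {x : (Fin n → ℝ) → Fin m → ℝ} {u : Fin n → ℝ} (hx : DifferentiableAt ℝ x u)
    (hsol : ∀ᶠ v in 𝓝 u, g (x v) v = 0) (hadj : (Jgx (x u) u)ᵀ *ᵥ μ = -gradfx (x u) u) :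
    HasFDerivAt (fun v => f (x v) v) (dCLM (gradfu (x u) u + (Jgu (x u) u)ᵀ *ᵥ μ)) u := by
  have h := (hasFDerivAt_lagrangian hf' hg' μ (x u, u)).comp_graph hx.hasFDerivAt
  refine (h.congr_of_eventuallyEq ?_).congr_fderiv ?_
  · filter_upwards [hsol] with v hv
    simp [lagrangian, hv]
  · ext
    simp [hadj, dCLM_apply]

theorem mulVec_fderiv_eq_of_implicit (hg' : HasPartialJacobians g Jgx Jgu)
    {x : (Fin n → ℝ) → Fin m → ℝ} {u : Fin n → ℝ} (hx : DifferentiableAt ℝ x u)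
    (hsol : ∀ᶠ v in 𝓝 u, g (x v) v = 0) (w : Fin n → ℝ) :
    Jgx (x u) u *ᵥ fderiv ℝ x u w = -(Jgu (x u) u *ᵥ w) := by
  have h := congrArg (· w)
    ((hg' (x u, u)).comp_add_eq_zero_of_eventually_eq_zero hx.hasFDerivAt hsol)
  simp only [_root_.add_apply, ContinuousLinearMap.comp_apply, mCLM_apply,
    _root_.zero_apply] at h
  exact eq_neg_of_add_eq_zero_left h

theorem hasFDerivAt_gradx_lagrangian_graph
    (hf : ContDiff ℝ 2 fun p : (Fin m → ℝ) × (Fin n → ℝ) => f p.1 p.2)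
    (hg : ContDiff ℝ 2 fun p : (Fin m → ℝ) × (Fin n → ℝ) => g p.1 p.2)
    (hf' : HasPartialGradients f gradfx gradfu) (hg' : HasPartialJacobians g Jgx Jgu)
    {x : (Fin n → ℝ) → Fin m → ℝ} {lam : (Fin n → ℝ) → Fin k → ℝ}
    (hx : DifferentiableAt ℝ x u₀) (hlam : DifferentiableAt ℝ lam u₀)
    (hLxx : HasFDerivAt (fun ξ => gradfx ξ u₀ + (Jgx ξ u₀)ᵀ *ᵥ lam u₀) (mCLM Lxx) (x u₀))
    (hLxu : HasFDerivAt (fun υ => gradfx (x u₀) υ + (Jgx (x u₀) υ)ᵀ *ᵥ lam u₀) (mCLM Lxu) u₀) :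
    HasFDerivAt (fun u => gradfx (x u) u + (Jgx (x u) u)ᵀ *ᵥ lam u)
      ((mCLM Lxx).comp (fderiv ℝ x u₀) + mCLM Lxu +
        (mCLM (Jgx (x u₀) u₀)ᵀ).comp (fderiv ℝ lam u₀)) u₀ := by
  refine hasFDerivAt_of_forall_dotProduct fun c => ?_
  have h := hasFDerivAt_fderiv_lagrangian_graph hf hg hx hlam (c, 0)
  simp only [fderiv_lagrangian_apply hf' hg', dotProduct_zero, add_zero] at h
  refine h.congr_fderiv ?_
  ext w
  simp [fderiv_fderiv_lagrangian_apply_inl hf hg hf' hg' hLxx hLxu, (hg' _).fderiv, dCLM_apply,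
    mCLM_apply, mulVec_transpose, dotProduct_mulVec]
  rw [dotProduct_comm, dotProduct_mulVec, dotProduct_comm]

theorem hasFDerivAt_gradu_lagrangian_graph
    (hf : ContDiff ℝ 2 fun p : (Fin m → ℝ) × (Fin n → ℝ) => f p.1 p.2)
    (hg : ContDiff ℝ 2 fun p : (Fin m → ℝ) × (Fin n → ℝ) => g p.1 p.2)
    (hf' : HasPartialGradients f gradfx gradfu) (hg' : HasPartialJacobians g Jgx Jgu)
    {x : (Fin n → ℝ) → Fin m → ℝ} {lam : (Fin n → ℝ) → Fin k → ℝ}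
    (hx : DifferentiableAt ℝ x u₀) (hlam : DifferentiableAt ℝ lam u₀)
    (hLxx : HasFDerivAt (fun ξ => gradfx ξ u₀ + (Jgx ξ u₀)ᵀ *ᵥ lam u₀) (mCLM Lxx) (x u₀))
    (hLxu : HasFDerivAt (fun υ => gradfx (x u₀) υ + (Jgx (x u₀) υ)ᵀ *ᵥ lam u₀) (mCLM Lxu) u₀)
    (hLuu : HasFDerivAt (fun υ => gradfu (x u₀) υ + (Jgu (x u₀) υ)ᵀ *ᵥ lam u₀) (mCLM Luu) u₀) :
    HasFDerivAt (fun u => gradfu (x u) u + (Jgu (x u) u)ᵀ *ᵥ lam u)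
      ((mCLM Lxuᵀ).comp (fderiv ℝ x u₀) + mCLM Luu +
        (mCLM (Jgu (x u₀) u₀)ᵀ).comp (fderiv ℝ lam u₀)) u₀ := by
  refine hasFDerivAt_of_forall_dotProduct fun d => ?_
  have h := hasFDerivAt_fderiv_lagrangian_graph hf hg hx hlam (0, d)
  simp only [fderiv_lagrangian_apply hf' hg', dotProduct_zero, zero_add] at h
  refine h.congr_fderiv ?_
  ext w
  simp [fderiv_fderiv_lagrangian_apply_inr hf hg hf' hg' hLxx hLxu hLuu, (hg' _).fderiv, dCLM_apply,
    mCLM_apply, mulVec_transpose, dotProduct_mulVec]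
  rw [dotProduct_comm, dotProduct_mulVec, dotProduct_comm]

end PartialGradients

/-- **Adjoint-adjoint method for reduced Hessian-vector products.**
With the Lagrangian `ℓ(x,u,λ) = f(x,u) + λᵀ g(x,u)` (whose gradients w.r.t. `x`
and `u` at the fixed adjoint `λ(u₀)` are `∂ₓf + λᵀ∇ₓg` and `∂ᵤf + λᵀ∇ᵤg`), the
reduced Hessian of `F u = f (x u) u` satisfies
`(∇²F) w = (∇²ᵤᵤℓ) w + (∇²ᵤₓℓ)ᵀ z + (∇ᵤg)ᵀ ψ`, where `z, ψ` solve the two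
second-order adjoint linear systems. -/
theorem reduced_hessian_adjoint_adjoint
    {nx nu : ℕ}
    (f : (Fin nx → ℝ) → (Fin nu → ℝ) → ℝ)
    (g : (Fin nx → ℝ) → (Fin nu → ℝ) → (Fin nx → ℝ))
    (x : (Fin nu → ℝ) → (Fin nx → ℝ)) (u₀ : Fin nu → ℝ)
    (hf : ContDiff ℝ 2 (fun p : (Fin nx → ℝ) × (Fin nu → ℝ) => f p.1 p.2))
    (hg : ContDiff ℝ 2 (fun p : (Fin nx → ℝ) × (Fin nu → ℝ) => g p.1 p.2))
    (hx : ContDiffAt ℝ 2 x u₀)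
    (hsol : ∀ᶠ u in nhds u₀, g (x u) u = 0)
    -- pointwise partial gradients of `f` and Jacobians of `g`
    (gradfx : (Fin nx → ℝ) → (Fin nu → ℝ) → (Fin nx → ℝ))
    (gradfu : (Fin nx → ℝ) → (Fin nu → ℝ) → (Fin nu → ℝ))
    (Jgx : (Fin nx → ℝ) → (Fin nu → ℝ) → Matrix (Fin nx) (Fin nx) ℝ)
    (Jgu : (Fin nx → ℝ) → (Fin nu → ℝ) → Matrix (Fin nx) (Fin nu) ℝ)
    (hfx : ∀ x' u', HasFDerivAt (fun ξ => f ξ u') (dCLM (gradfx x' u')) x')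
    (hfu : ∀ x' u', HasFDerivAt (fun υ => f x' υ) (dCLM (gradfu x' u')) u')
    (hgx : ∀ x' u', HasFDerivAt (fun ξ => g ξ u') (mCLM (Jgx x' u')) x')
    (hgu : ∀ x' u', HasFDerivAt (fun υ => g x' υ) (mCLM (Jgu x' u')) u')
    (hinv : IsUnit (Jgx (x u₀) u₀).det)
    -- the first-order adjoint `λ(u)`, solving `(∇ₓg)ᵀ λ = −(∂ₓf)ᵀ` along the path
    (lam : (Fin nu → ℝ) → (Fin nx → ℝ))
    (hlamdiff : DifferentiableAt ℝ lam u₀)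
    (hlam : ∀ᶠ u in nhds u₀, (Jgx (x u) u)ᵀ *ᵥ lam u = -(gradfx (x u) u))
    -- Hessian blocks of the Lagrangian `ℓ(·,·,λ(u₀))` at `(x u₀, u₀)`
    (Lxx : Matrix (Fin nx) (Fin nx) ℝ) (Lxu : Matrix (Fin nx) (Fin nu) ℝ)
    (Luu : Matrix (Fin nu) (Fin nu) ℝ)
    (hLxx : HasFDerivAt
      (fun ξ => gradfx ξ u₀ + (Jgx ξ u₀)ᵀ *ᵥ lam u₀) (mCLM Lxx) (x u₀))
    (hLxu : HasFDerivAt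
      (fun υ => gradfx (x u₀) υ + (Jgx (x u₀) υ)ᵀ *ᵥ lam u₀) (mCLM Lxu) u₀)
    (hLuu : HasFDerivAt
      (fun υ => gradfu (x u₀) υ + (Jgu (x u₀) υ)ᵀ *ᵥ lam u₀) (mCLM Luu) u₀)
    -- gradient and Hessian of the reduced objective `F u = f (x u) u`
    (gradF : (Fin nu → ℝ) → (Fin nu → ℝ)) (HessF : Matrix (Fin nu) (Fin nu) ℝ)
    (hgradF : ∀ᶠ u in nhds u₀, HasFDerivAt (fun u' => f (x u') u') (dCLM (gradF u)) u)
    (hHessF : HasFDerivAt gradF (mCLM HessF) u₀)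
    -- the second-order adjoints `z, ψ` and the direction `w`
    (w : Fin nu → ℝ) (z ψ : Fin nx → ℝ)
    (hz : Jgx (x u₀) u₀ *ᵥ z = -(Jgu (x u₀) u₀ *ᵥ w))
    (hψ : (Jgx (x u₀) u₀)ᵀ *ᵥ ψ = -(Lxu *ᵥ w) - Lxx *ᵥ z) :
    HessF *ᵥ w = Luu *ᵥ w + Lxuᵀ *ᵥ z + (Jgu (x u₀) u₀)ᵀ *ᵥ ψ := by
  have hf' : HasPartialGradients f gradfx gradfu := fun p =>
    (hf.differentiable two_ne_zero p).hasFDerivAt_coprod (hfx p.1 p.2) (hfu p.1 p.2)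
  have hg' : HasPartialJacobians g Jgx Jgu := fun p =>
    (hg.differentiable two_ne_zero p).hasFDerivAt_coprod (hgx p.1 p.2) (hgu p.1 p.2)
  have hx₀ : DifferentiableAt ℝ x u₀ := hx.differentiableAt two_ne_zero
  have hJ : IsUnit (Jgx (x u₀) u₀) := (isUnit_iff_isUnit_det _).mpr hinv
  have hxz : fderiv ℝ x u₀ w = z :=
    mulVec_injective_iff_isUnit.mpr hJ (by rw [mulVec_fderiv_eq_of_implicit hg' hx₀ hsol, hz])
  have hlamψ : fderiv ℝ lam u₀ w = ψ := by
    have h := (hasFDerivAt_gradx_lagrangian_graph hf hg hf' hg' hx₀ hlamdiff hLxx hLxu).unique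
      ((hasFDerivAt_const 0 u₀).congr_of_eventuallyEq (hlam.mono fun u hu => by simp [hu]))
    have hw := congrArg (· w) h
    simp only [_root_.add_apply, ContinuousLinearMap.comp_apply, mCLM_apply,
      _root_.zero_apply, hxz] at hw
    refine mulVec_injective_iff_isUnit.mpr ((isUnit_transpose _).mpr hJ) ?_
    rw [hψ, eq_neg_of_add_eq_zero_right hw]
    abel
  have hgradF_eq : ∀ᶠ u in 𝓝 u₀, gradF u = gradfu (x u) u + (Jgu (x u) u)ᵀ *ᵥ lam u := by
    filter_upwards [hgradF, hsol.eventually_nhds, hlam, hx.eventually (by simp)]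
      with u hF hsol_u hlam_u hx_u
    exact dCLM_injective (hF.unique (hasFDerivAt_reduced_of_adjoint hf' hg'
      (hx_u.differentiableAt two_ne_zero) hsol_u hlam_u))
  have h := (hasFDerivAt_gradu_lagrangian_graph hf hg hf' hg' hx₀ hlamdiff hLxx hLxu hLuu).unique
    (hHessF.congr_of_eventuallyEq (hgradF_eq.mono fun u hu => hu.symm))
  have hw := congrArg (· w) h
  simp only [_root_.add_apply, ContinuousLinearMap.comp_apply, mCLM_apply,
    hxz, hlamψ] at hw
  rw [← hw]
  abel
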